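/- Let a ≠ 0, b ≠ 0, and let A, B, φ, w^x, w^y be real numbers. Define f¹ = ((w^x − A)/a)² + ((w^y − B)/b)², f² = ((w^x − A)/b)² + ((w^y − B)/a)², f³ = (b² − a²)(w^x − A)(w^y − B)/(a²b²), and C = (1 − f¹·cos²φ − f²·sin²φ − f³·sin 2φ)². Then C = 0 if and only if there exists ρ ∈ ℝ such that w^x = A + a·cos ρ·cos φ − b·sin ρ·sin φ and w^y = B + a·cos ρ·sin φ + b·sin ρ·cos φ. -/
import Mathlib


open Real

lemma circle_param (x y : ℝ) (h : x ^ 2 + y ^ 2 = 1) :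
    ∃ θ : ℝ, Real.cos θ = x ∧ Real.sin θ = y := by
  have hx1 : -1 ≤ x := by nlinarith [sq_nonneg y]
  have hx2 : x ≤ 1 := by nlinarith [sq_nonneg y]
  have hsin : Real.sin (Real.arccos x) = |y| := by
    rw [Real.sin_arccos, show 1 - x ^ 2 = y ^ 2 by linarith]
    exact Real.sqrt_sq_eq_abs y
  rcases le_or_gt 0 y with hy | hy
  · exact ⟨Real.arccos x, Real.cos_arccos hx1 hx2, by rw [hsin, abs_of_nonneg hy]⟩
  · exact ⟨-Real.arccos x, by rw [Real.cos_neg]; exact Real.cos_arccos hx1 hx2,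
      by rw [Real.sin_neg, hsin, abs_of_neg hy, neg_neg]⟩

theorem stmt_11 (a b A B φ wx wy : ℝ) (ha : a ≠ 0) (hb : b ≠ 0) :
    (1 - (((wx - A) / a) ^ 2 + ((wy - B) / b) ^ 2) * Real.cos φ ^ 2 -
          (((wx - A) / b) ^ 2 + ((wy - B) / a) ^ 2) * Real.sin φ ^ 2 -
          ((b ^ 2 - a ^ 2) * (wx - A) * (wy - B) / (a ^ 2 * b ^ 2)) * Real.sin (2 * φ)) ^ 2 = 0 ↔
      ∃ ρ : ℝ, wx = A + a * Real.cos ρ * Real.cos φ - b * Real.sin ρ * Real.sin φ ∧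
        wy = B + a * Real.cos ρ * Real.sin φ + b * Real.sin ρ * Real.cos φ := by
  have hpy : Real.sin φ ^ 2 + Real.cos φ ^ 2 = 1 := Real.sin_sq_add_cos_sq φ
  set p : ℝ := (wx - A) * Real.cos φ + (wy - B) * Real.sin φ with hp
  set q : ℝ := -(wx - A) * Real.sin φ + (wy - B) * Real.cos φ with hq
  have hid : (1 - (((wx - A) / a) ^ 2 + ((wy - B) / b) ^ 2) * Real.cos φ ^ 2 -
          (((wx - A) / b) ^ 2 + ((wy - B) / a) ^ 2) * Real.sin φ ^ 2 -
          ((b ^ 2 - a ^ 2) * (wx - A) * (wy - B) / (a ^ 2 * b ^ 2)) * Real.sin (2 * φ))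
        = 1 - (p / a) ^ 2 - (q / b) ^ 2 := by
    rw [Real.sin_two_mul, hp, hq]
    field_simp
    ring
  rw [sq_eq_zero_iff, hid]
  constructor
  · intro h
    have hc : (p / a) ^ 2 + (q / b) ^ 2 = 1 := by linarith
    obtain ⟨θ, hcθ, hsθ⟩ := circle_param _ _ hc
    have hap : a * Real.cos θ = p := by rw [hcθ]; field_simp
    have hbq : b * Real.sin θ = q := by rw [hsθ]; field_simp
    refine ⟨θ, ?_, ?_⟩
    · have : a * Real.cos θ * Real.cos φ - b * Real.sin θ * Real.sin φ = wx - A := by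
        rw [hap, hbq, hp, hq]; linear_combination (wx - A) * hpy
      linarith
    · have : a * Real.cos θ * Real.sin φ + b * Real.sin θ * Real.cos φ = wy - B := by
        rw [hap, hbq, hp, hq]; linear_combination (wy - B) * hpy
      linarith
  · rintro ⟨ρ, h1, h2⟩
    have hpyρ : Real.sin ρ ^ 2 + Real.cos ρ ^ 2 = 1 := Real.sin_sq_add_cos_sq ρ
    have hpa : p = a * Real.cos ρ := by
      rw [hp, h1, h2]; linear_combination (a * Real.cos ρ) * hpy
    have hqb : q = b * Real.sin ρ := by
      rw [hq, h1, h2]; linear_combination (b * Real.sin ρ) * hpy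
    rw [hpa, hqb, mul_div_cancel_left₀ _ ha, mul_div_cancel_left₀ _ hb]
    linarith
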